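/- arXiv:1810.02567 — 2 statements merged into one kernel-verified Lean document; each statement's English description precedes it below -/
import Mathlib

section
/- Let d and n be positive natural numbers, let U be a real d×n matrix with U Uᵀ invertible, and set Q = (1/n) · U Uᵀ. If x = U α for some α ∈ ℝⁿ with Euclidean norm ‖α‖₂ ≤ 1, then xᵀ Q⁻¹ x ≤ n. -/
open Matrix

private lemma dot_adj {m k : ℕ} (A : Matrix (Fin m) (Fin k) ℝ) (v : Fin m → ℝ) (w : Fin k → ℝ) :
    (A *ᵥ w) ⬝ᵥ v = w ⬝ᵥ (Aᵀ *ᵥ v) := by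
  rw [Matrix.dotProduct_mulVec, Matrix.vecMul_transpose]

/-- If `U` is a real d×n matrix with `U * Uᵀ` invertible,
`Q = (1/n) • (U * Uᵀ)`, and `x = U α` with `‖α‖₂ ≤ 1`, then `xᵀ Q⁻¹ x ≤ n`. -/
theorem volumetric_spanner_design_bound
    (d n : ℕ) (hd : 0 < d) (hn : 0 < n)
    (U : Matrix (Fin d) (Fin n) ℝ) (hU : IsUnit (U * Uᵀ))
    (Q : Matrix (Fin d) (Fin d) ℝ) (hQ : Q = ((n : ℝ)⁻¹) • (U * Uᵀ))
    (α : Fin n → ℝ) (hα : Real.sqrt (∑ i, α i ^ 2) ≤ 1)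
    (x : Fin d → ℝ) (hx : x = U *ᵥ α) :
    x ⬝ᵥ (Q⁻¹ *ᵥ x) ≤ n := by
  set M : Matrix (Fin d) (Fin d) ℝ := U * Uᵀ with hM
  have hMdet : IsUnit M.det := (Matrix.isUnit_iff_isUnit_det M).mp hU
  have hnne : ((n : ℝ))⁻¹ ≠ 0 := inv_ne_zero (Nat.cast_ne_zero.mpr hn.ne')
  have hninv : Invertible ((n : ℝ)⁻¹) := invertibleOfNonzero hnne
  have hQinv : Q⁻¹ = (n : ℝ) • M⁻¹ := by
    rw [hQ, Matrix.inv_smul (A := M) (k := (n:ℝ)⁻¹) hMdet, invOf_eq_inv, inv_inv]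
  set β : Fin n → ℝ := Uᵀ *ᵥ (M⁻¹ *ᵥ x) with hβ
  have hUβ : U *ᵥ β = x := by
    rw [hβ, Matrix.mulVec_mulVec, Matrix.mulVec_mulVec, ← hM,
      Matrix.mul_nonsing_inv M hMdet, Matrix.one_mulVec]
  have h1 : x ⬝ᵥ (M⁻¹ *ᵥ x) = α ⬝ᵥ β := by
    nth_rewrite 1 [hx]
    rw [dot_adj U (M⁻¹ *ᵥ x) α, ← hβ]
  have h2 : β ⬝ᵥ β = x ⬝ᵥ (M⁻¹ *ᵥ x) := by
    conv_lhs => rw [hβ]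
    rw [dot_adj Uᵀ β (M⁻¹ *ᵥ x), Matrix.transpose_transpose, hUβ,
      dotProduct_comm]
  have hα2 : (∑ i, α i ^ 2) ≤ 1 := by
    have h0 : (0:ℝ) ≤ ∑ i, α i ^ 2 := Finset.sum_nonneg fun i _ => sq_nonneg _
    nlinarith [Real.sq_sqrt h0, Real.sqrt_nonneg (∑ i, α i ^ 2)]
  have hcs : (α ⬝ᵥ β) ^ 2 ≤ (∑ i, α i ^ 2) * (∑ i, β i ^ 2) :=
    Finset.sum_mul_sq_le_sq_mul_sq _ _ _
  have hββ : β ⬝ᵥ β = ∑ i, β i ^ 2 := by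
    simp [dotProduct, sq]
  have hβnn : (0:ℝ) ≤ β ⬝ᵥ β := by
    rw [hββ]; exact Finset.sum_nonneg fun i _ => sq_nonneg _
  have hkey : x ⬝ᵥ (M⁻¹ *ᵥ x) ≤ 1 := by
    have ht : β ⬝ᵥ β ≤ 1 := by
      have hsq : (β ⬝ᵥ β) ^ 2 ≤ β ⬝ᵥ β := by
        calc (β ⬝ᵥ β) ^ 2 = (α ⬝ᵥ β) ^ 2 := by rw [h2, ← h1]
        _ ≤ (∑ i, α i ^ 2) * (∑ i, β i ^ 2) := hcs
        _ ≤ 1 * (β ⬝ᵥ β) := by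
            rw [← hββ]
            exact mul_le_mul_of_nonneg_right hα2 hβnn
        _ = β ⬝ᵥ β := one_mul _
      nlinarith
    rw [← h2]; exact ht
  rw [hQinv, Matrix.smul_mulVec, dotProduct_smul, smul_eq_mul]
  calc (n:ℝ) * (x ⬝ᵥ (M⁻¹ *ᵥ x)) ≤ (n:ℝ) * 1 :=
        mul_le_mul_of_nonneg_left hkey (Nat.cast_nonneg n)
  _ = n := mul_one _
end

section
/- Let (Ω, ℱ, P) be a probability space, d, m positive natural numbers, β : Fin m → ℝᵈ fixed vectors with V = Σᵢ β(i) β(i)ᵀ invertible, θ⋆ ∈ ℝᵈ, χ ∈ ℝ, and η : Fin m → Ω → ℝ an independent family of random variables with E[exp(λ·η(i))] ≤ exp(λ²/8) for all λ ∈ ℝ and all i. Define ζ(i) = χ·⟨θ⋆, β(i)⟩ + η(i) and the least-squares estimator θ̂ = V⁻¹ (Σᵢ ζ(i)·β(i)). Then for every nonzero a ∈ ℝᵈ and every δ ∈ (0, 1), P( |⟨θ̂, a⟩ − χ·⟨θ⋆, a⟩| ≥ √( (1/2)·(aᵀ V⁻¹ a)·log(1/δ) ) ) ≤ 2δ. 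-/
/-!
Write `B` for the design matrix with rows `β i`, so that `V = Bᵀ B` and `∑ i, ζ i • β i = Bᵀ ζ`.
The estimator is unbiased up to noise: `θ̂ = χ θ⋆ + V⁻¹ Bᵀ η`, hence by symmetry of `V⁻¹` the error
`⟨θ̂, a⟩ - χ ⟨θ⋆, a⟩` is the weighted noise sum `∑ i, w i * η i` with `w = B V⁻¹ a`, and
`‖w‖² = aᵀ V⁻¹ a`, which is positive for `a ≠ 0` since `V⁻¹` is positive definite.
By independence this sum is sub-Gaussian with variance proxy `‖w‖² / 4`, and the two one-sided
Chernoff bounds at the threshold `√(‖w‖² log (1/δ) / 2)` are each `δ`.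
-/

open Matrix MeasureTheory ProbabilityTheory Real

open scoped NNReal

namespace Matrix

variable {ι n R : Type*} [Fintype ι]

lemma sum_vecMulVec_self_eq_transpose_mul [CommSemiring R] (β : ι → n → R) :
    ∑ i, vecMulVec (β i) (β i) = (of β)ᵀ * of β := by
  ext j k
  simp [Matrix.mul_apply, vecMulVec_apply, Matrix.sum_apply]

lemma sum_smul_eq_transpose_mulVec [CommSemiring R] (β : ι → n → R) (v : ι → R) :
    ∑ i, v i • β i = (of β)ᵀ *ᵥ v := by
  rw [mulVec_transpose, vecMul_eq_sum]
  rfl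

variable [Fintype n] [DecidableEq n] [CommRing R]

lemma inv_transpose_mul_self_mulVec_dotProduct (B : Matrix ι n R) (e : ι → R) (a : n → R) :
    ((Bᵀ * B)⁻¹ *ᵥ (Bᵀ *ᵥ e)) ⬝ᵥ a = (B *ᵥ ((Bᵀ * B)⁻¹ *ᵥ a)) ⬝ᵥ e := by
  have hsymm : ((Bᵀ * B)⁻¹)ᵀ = (Bᵀ * B)⁻¹ := by
    rw [transpose_nonsing_inv, transpose_mul, transpose_transpose]
  rw [dotProduct_comm, dotProduct_mulVec, ← mulVec_transpose, hsymm, dotProduct_mulVec,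
    ← mulVec_transpose, transpose_transpose, dotProduct_comm]

lemma inv_transpose_mul_self_mulVec_transpose_mulVec (B : Matrix ι n R) (hB : IsUnit (Bᵀ * B))
    (θ : n → R) (χ : R) (e : ι → R) :
    (Bᵀ * B)⁻¹ *ᵥ (Bᵀ *ᵥ (χ • (B *ᵥ θ) + e)) = χ • θ + (Bᵀ * B)⁻¹ *ᵥ (Bᵀ *ᵥ e) := by
  rw [mulVec_add, mulVec_smul, mulVec_mulVec θ, mulVec_add, mulVec_smul, mulVec_mulVec θ,
    nonsing_inv_mul _ ((isUnit_iff_isUnit_det _).1 hB), one_mulVec]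

lemma leastSquares_dotProduct_sub (B : Matrix ι n R) (hB : IsUnit (Bᵀ * B))
    (θ a : n → R) (χ : R) (e : ι → R) :
    ((Bᵀ * B)⁻¹ *ᵥ (Bᵀ *ᵥ (χ • (B *ᵥ θ) + e))) ⬝ᵥ a - χ * (θ ⬝ᵥ a) =
      (B *ᵥ ((Bᵀ * B)⁻¹ *ᵥ a)) ⬝ᵥ e := by
  rw [inv_transpose_mul_self_mulVec_transpose_mulVec B hB, add_dotProduct, smul_dotProduct,
    smul_eq_mul, add_sub_cancel_left, inv_transpose_mul_self_mulVec_dotProduct]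

lemma dotProduct_self_mulVec_inv_transpose_mul_self (B : Matrix ι n R) (hB : IsUnit (Bᵀ * B))
    (a : n → R) :
    (B *ᵥ ((Bᵀ * B)⁻¹ *ᵥ a)) ⬝ᵥ (B *ᵥ ((Bᵀ * B)⁻¹ *ᵥ a)) = a ⬝ᵥ ((Bᵀ * B)⁻¹ *ᵥ a) := by
  rw [dotProduct_mulVec, ← mulVec_transpose, mulVec_mulVec, mulVec_mulVec,
    mul_nonsing_inv _ ((isUnit_iff_isUnit_det _).1 hB), one_mulVec]

lemma dotProduct_inv_transpose_mul_self_mulVec_pos (B : Matrix ι n ℝ) (hB : IsUnit (Bᵀ * B))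
    {a : n → ℝ} (ha : a ≠ 0) : 0 < a ⬝ᵥ ((Bᵀ * B)⁻¹ *ᵥ a) := by
  have hpos : (Bᵀ * B).PosDef := by
    simpa using (posSemidef_conjTranspose_mul_self B).posDef_iff_isUnit.2 (by simpa using hB)
  simpa using hpos.inv.dotProduct_mulVec_pos ha

end Matrix

namespace ProbabilityTheory.HasSubgaussianMGF

variable {Ω : Type*} [MeasurableSpace Ω] {μ : Measure Ω} {c : ℝ≥0}

lemma sum_mul_of_iIndepFun {ι : Type*} {X : ι → Ω → ℝ} (h_indep : iIndepFun X μ)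
    (h_subG : ∀ i, HasSubgaussianMGF (X i) c μ) (w : ι → ℝ) (s : Finset ι) :
    HasSubgaussianMGF (fun ω ↦ ∑ i ∈ s, w i * X i ω) ((∑ i ∈ s, (w i ^ 2).toNNReal) * c) μ := by
  simp_rw [Finset.sum_mul, Real.toNNReal_of_nonneg (sq_nonneg _)]
  exact sum_of_iIndepFun (h_indep.comp (fun i x ↦ w i * x) fun i ↦ measurable_const_mul (w i))
    fun i _ ↦ (h_subG i).const_mul (w i)

lemma measureReal_abs_ge_le [IsFiniteMeasure μ] {X : Ω → ℝ} (h : HasSubgaussianMGF X c μ)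
    {ε : ℝ} (hε : 0 ≤ ε) : μ.real {ω | ε ≤ |X ω|} ≤ 2 * exp (-ε ^ 2 / (2 * c)) := by
  have hsplit : {ω | ε ≤ |X ω|} = {ω | ε ≤ X ω} ∪ {ω | ε ≤ (-X) ω} := by
    ext ω
    simp [le_abs]
  calc μ.real {ω | ε ≤ |X ω|}
      ≤ μ.real {ω | ε ≤ X ω} + μ.real {ω | ε ≤ (-X) ω} := hsplit ▸ measureReal_union_le _ _
    _ ≤ exp (-ε ^ 2 / (2 * c)) + exp (-ε ^ 2 / (2 * c)) :=
      add_le_add (h.measure_ge_le hε) (h.neg.measure_ge_le hε)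
    _ = 2 * exp (-ε ^ 2 / (2 * c)) := (two_mul _).symm

lemma measureReal_sqrt_log_le_abs_le [IsFiniteMeasure μ] {X : Ω → ℝ}
    (h : HasSubgaussianMGF X c μ) (hc : 0 < c) {δ : ℝ} (hδ0 : 0 < δ) (hδ1 : δ ≤ 1) :
    μ.real {ω | √(2 * c * log (1 / δ)) ≤ |X ω|} ≤ 2 * δ := by
  have hlog : 0 ≤ log (1 / δ) := log_nonneg (one_le_one_div hδ0 hδ1)
  have hexp : exp (-√(2 * c * log (1 / δ)) ^ 2 / (2 * c)) = δ := by
    rw [sq_sqrt (by positivity), neg_div, mul_div_cancel_left₀ _ (by positivity), exp_neg,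
      exp_log (by positivity), one_div, inv_inv]
  exact (h.measureReal_abs_ge_le (sqrt_nonneg _)).trans_eq (by rw [hexp])

end ProbabilityTheory.HasSubgaussianMGF

theorem least_squares_concentration_general
    {Ω : Type*} [MeasurableSpace Ω] (P : Measure Ω) [IsProbabilityMeasure P]
    (d m : ℕ)
    (β : Fin m → (Fin d → ℝ))
    (V : Matrix (Fin d) (Fin d) ℝ) (hV : V = ∑ i, vecMulVec (β i) (β i))
    (hVinv : IsUnit V)
    (θst : Fin d → ℝ) (χ : ℝ)
    (η : Fin m → Ω → ℝ)
    (hindep : iIndepFun η P)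
    (hint : ∀ i (l : ℝ), Integrable (fun ω => Real.exp (l * η i ω)) P)
    (hsub : ∀ i (l : ℝ), ∫ ω, Real.exp (l * η i ω) ∂P ≤ Real.exp (l ^ 2 / 8))
    (ζ : Fin m → Ω → ℝ) (hζ : ∀ i ω, ζ i ω = χ * (θst ⬝ᵥ β i) + η i ω)
    (θhat : Ω → (Fin d → ℝ)) (hθhat : ∀ ω, θhat ω = V⁻¹ *ᵥ (∑ i, ζ i ω • β i)) :
    ∀ a : Fin d → ℝ, a ≠ 0 → ∀ δ : ℝ, 0 < δ → δ < 1 →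
      P {ω | Real.sqrt ((1 / 2) * (a ⬝ᵥ (V⁻¹ *ᵥ a)) * Real.log (1 / δ)) ≤
          |θhat ω ⬝ᵥ a - χ * (θst ⬝ᵥ a)|} ≤ ENNReal.ofReal (2 * δ) := by
  intro a ha δ hδ0 hδ1
  set B : Matrix (Fin m) (Fin d) ℝ := of β
  rw [sum_vecMulVec_self_eq_transpose_mul] at hV
  subst hV
  set w := B *ᵥ ((Bᵀ * B)⁻¹ *ᵥ a)
  have herr : ∀ ω, θhat ω ⬝ᵥ a - χ * (θst ⬝ᵥ a) = ∑ i, w i * η i ω := fun ω ↦ by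
    have hζω : (fun i ↦ ζ i ω) = χ • (B *ᵥ θst) + fun i ↦ η i ω := by
      funext i
      simp [hζ, B, mulVec, dotProduct_comm]
    rw [hθhat, sum_smul_eq_transpose_mulVec, hζω, leastSquares_dotProduct_sub B hVinv]
    rfl
  have hη : ∀ i, HasSubgaussianMGF (η i) 4⁻¹ P := fun i ↦
    ⟨hint i, fun l ↦ (hsub i l).trans_eq (by push_cast; ring_nf)⟩
  have hsg := HasSubgaussianMGF.sum_mul_of_iIndepFun hindep hη w Finset.univ
  have hvar : 2 * (((∑ i, (w i ^ 2).toNNReal) * 4⁻¹ : ℝ≥0) : ℝ) =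
      1 / 2 * (a ⬝ᵥ ((Bᵀ * B)⁻¹ *ᵥ a)) := by
    rw [← dotProduct_self_mulVec_inv_transpose_mul_self B hVinv]
    simp only [NNReal.coe_mul, NNReal.coe_sum, Real.coe_toNNReal _ (sq_nonneg _), NNReal.coe_inv,
      NNReal.coe_ofNat, dotProduct, ← sq]
    ring
  have hpos := dotProduct_inv_transpose_mul_self_mulVec_pos B hVinv ha
  have htail := hsg.measureReal_sqrt_log_le_abs_le (NNReal.coe_pos.1 (by linarith)) hδ0 hδ1.le
  rw [hvar] at htail
  simp only [herr]
  rw [ENNReal.le_ofReal_iff_toReal_le (measure_ne_top _ _) (by positivity)]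
  exact htail

/-- fixed-design least-squares concentration. With
`ζ(i) = χ·⟨θ⋆, β(i)⟩ + η(i)` for independent 1/2-subgaussian noise `η` and
`θ̂ = V⁻¹ (Σᵢ ζ(i)·β(i))`, `V = Σᵢ β(i)β(i)ᵀ` invertible, for every nonzero `a`
and `δ ∈ (0,1)`,
`P(|⟨θ̂, a⟩ − χ·⟨θ⋆, a⟩| ≥ √((1/2)·aᵀV⁻¹a·log(1/δ))) ≤ 2δ`. -/
theorem least_squares_concentration
    {Ω : Type*} [MeasurableSpace Ω] (P : Measure Ω) [IsProbabilityMeasure P]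
    (d m : ℕ) (hd : 0 < d) (hm : 0 < m)
    (β : Fin m → (Fin d → ℝ))
    (V : Matrix (Fin d) (Fin d) ℝ) (hV : V = ∑ i, vecMulVec (β i) (β i))
    (hVinv : IsUnit V)
    (θst : Fin d → ℝ) (χ : ℝ)
    (η : Fin m → Ω → ℝ)
    (hmeas : ∀ i, Measurable (η i))
    (hindep : iIndepFun η P)
    (hint : ∀ i (l : ℝ), Integrable (fun ω => Real.exp (l * η i ω)) P)
    (hsub : ∀ i (l : ℝ), ∫ ω, Real.exp (l * η i ω) ∂P ≤ Real.exp (l ^ 2 / 8))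
    (ζ : Fin m → Ω → ℝ) (hζ : ∀ i ω, ζ i ω = χ * (θst ⬝ᵥ β i) + η i ω)
    (θhat : Ω → (Fin d → ℝ)) (hθhat : ∀ ω, θhat ω = V⁻¹ *ᵥ (∑ i, ζ i ω • β i)) :
    ∀ a : Fin d → ℝ, a ≠ 0 → ∀ δ : ℝ, 0 < δ → δ < 1 →
      P {ω | Real.sqrt ((1 / 2) * (a ⬝ᵥ (V⁻¹ *ᵥ a)) * Real.log (1 / δ)) ≤
          |θhat ω ⬝ᵥ a - χ * (θst ⬝ᵥ a)|} ≤ ENNReal.ofReal (2 * δ) :=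
  least_squares_concentration_general P d m β V hV hVinv θst χ η hindep hint hsub ζ hζ θhat hθhat
end
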